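/- arXiv:1907.00306 — 2 statements merged into one kernel-verified Lean document; each statement's English description precedes it below -/
import Mathlib

section
/- In the truncated model M_k: if a sentence A (containing only the predicate symbol P) satisfies M_k ⊨ A ↔ ∀u □(A → P(u)), then for every n ≤ k, M_k, n ⊨ A if and only if n is even. -/
namespace PML

/-- Formulas of predicate modal logic, with propositional variables (language L''). -/
inductive Fml : Type
  | verum : Fml
  | falsum : Fml
  | pvar (q : ℕ) : Fml
  | pred (P : ℕ) (args : List ℕ) : Fml
  | neg (A : Fml) : Fml
  | imp (A B : Fml) : Fml
  | all (u : ℕ) (A : Fml) : Fml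
  | box (A : Fml) : Fml

namespace Fml

def lor (A B : Fml) : Fml := A.neg.imp B
def land (A B : Fml) : Fml := (A.imp B.neg).neg
def iff (A B : Fml) : Fml := (A.imp B).land (B.imp A)
def ex (u : ℕ) (A : Fml) : Fml := (Fml.all u A.neg).neg
def boxdot (A : Fml) : Fml := A.box.land A

def boxIter : ℕ → Fml → Fml
  | 0, A => A
  | n + 1, A => (boxIter n A).box

/-- Free variables. -/
def free : Fml → Finset ℕ
  | pred _ args => args.toFinset
  | neg A => A.free
  | imp A B => A.free ∪ B.free
  | all u A => A.free.erase u
  | box A => A.free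
  | _ => ∅

/-- Bound variables. -/
def bound : Fml → Finset ℕ
  | neg A => A.bound
  | imp A B => A.bound ∪ B.bound
  | all u A => insert u A.bound
  | box A => A.bound
  | _ => ∅

/-- Propositional variables occurring in a formula. -/
def pvars : Fml → Finset ℕ
  | pvar q => {q}
  | neg A => A.pvars
  | imp A B => A.pvars ∪ B.pvars
  | all _ A => A.pvars
  | box A => A.pvars
  | _ => ∅

/-- Predicate symbols occurring in a formula. -/
def preds : Fml → Finset ℕ
  | pred P _ => {P}
  | neg A => A.preds
  | imp A B => A.preds ∪ B.preds
  | all _ A => A.preds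
  | box A => A.preds
  | _ => ∅

/-- Predicate symbols together with the arity they are used with. -/
def predSig : Fml → Finset (ℕ × ℕ)
  | pred P args => {(P, args.length)}
  | neg A => A.predSig
  | imp A B => A.predSig ∪ B.predSig
  | all _ A => A.predSig
  | box A => A.predSig
  | _ => ∅

/-- Rename free occurrences of the variable `u` to `v`. -/
def rename : Fml → ℕ → ℕ → Fml
  | pred P args, u, v => pred P (args.map fun x => if x = u then v else x)
  | neg A, u, v => (A.rename u v).neg
  | imp A B, u, v => (A.rename u v).imp (B.rename u v)
  | all w A, u, v => if w = u then all w A else all w (A.rename u v)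
  | box A, u, v => (A.rename u v).box
  | A, _, _ => A

/-- Substitution of a formula for a propositional variable. -/
def psub : Fml → ℕ → Fml → Fml
  | pvar q, p, B => if q = p then B else pvar q
  | neg A, p, B => (A.psub p B).neg
  | imp A C, p, B => (A.psub p B).imp (C.psub p B)
  | all u A, p, B => all u (A.psub p B)
  | box A, p, B => (A.psub p B).box
  | A, _, _ => A

/-- Simultaneous substitution of formulas for all propositional variables. -/
def msub : Fml → (ℕ → Fml) → Fml
  | pvar q, σ => σ q
  | neg A, σ => (A.msub σ).neg
  | imp A C, σ => (A.msub σ).imp (C.msub σ)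
  | all u A, σ => all u (A.msub σ)
  | box A, σ => (A.msub σ).box
  | A, _ => A

/-- Depth-indexed substitution: occurrences of `p` at modal depth `i` are replaced by `σ i`. -/
def dsub : Fml → ℕ → (ℕ → Fml) → Fml
  | pvar q, p, σ => if q = p then σ 0 else pvar q
  | neg A, p, σ => (A.dsub p σ).neg
  | imp A C, p, σ => (A.dsub p σ).imp (C.dsub p σ)
  | all u A, p, σ => all u (A.dsub p σ)
  | box A, p, σ => (A.dsub p (fun i => σ (i + 1))).box
  | A, _, _ => A

/-- `A(p)[B_0,…,B_k]` for a list `[B_0,…,B_k]`. -/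
def dsubL (A : Fml) (p : ℕ) (L : List Fml) : Fml := A.dsub p (fun i => L.getD i verum)

/-- `A^{⊤(n)}`: replace every boxed subformula at modal depth `n` by `⊤`. -/
def eraseT : ℕ → Fml → Fml
  | 0, box _ => verum
  | n + 1, box A => (eraseT n A).box
  | n, neg A => (eraseT n A).neg
  | n, imp A B => (eraseT n A).imp (eraseT n B)
  | n, all u A => all u (eraseT n A)
  | _, A => A

/-- `occursAt p A d`: the propositional variable `p` occurs in `A` at modal depth `d`. -/
def occursAt (p : ℕ) : Fml → ℕ → Prop
  | pvar q, d => q = p ∧ d = 0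
  | neg A, d => occursAt p A d
  | imp A B, d => occursAt p A d ∨ occursAt p B d
  | all _ A, d => occursAt p A d
  | box A, d => ∃ d', d = d' + 1 ∧ occursAt p A d'
  | _, _ => False

/-- `A` is modalized in `p`: no occurrence of `p` at depth `0`. -/
def Modalized (p : ℕ) (A : Fml) : Prop := ¬ occursAt p A 0

/-- Conjunction of a list of formulas. -/
def conj : List Fml → Fml
  | [] => verum
  | A :: L => A.land (conj L)

/-- The canonical fixed-point sequence:
`A_0 := A^{⊤(0)}(p)[⊤]`, `A_{k+1} := A^{⊤(k+1)}(p)[⊤, A_k, …, A_0]`. -/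
def fpSeq (p : ℕ) (A : Fml) : ℕ → Fml
  | 0 => (eraseT 0 A).dsub p (fun _ => verum)
  | n + 1 => (eraseT (n + 1) A).dsub p
      (fun i => match i with
        | 0 => verum
        | j + 1 => fpSeq p A (n - j))
  termination_by k => k
  decreasing_by omega

end Fml

open Fml

/-- Axioms of predicate logic, together with the modal distribution axiom K. -/
inductive Ax : Fml → Prop
  | imp1 (A B : Fml) : Ax (A.imp (B.imp A))
  | imp2 (A B C : Fml) : Ax ((A.imp (B.imp C)).imp ((A.imp B).imp (A.imp C)))
  | contra (A B : Fml) : Ax ((A.neg.imp B.neg).imp (B.imp A))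
  | verum : Ax Fml.verum
  | exfalso (A : Fml) : Ax (Fml.falsum.imp A)
  | negE (A : Fml) : Ax (A.neg.imp (A.imp Fml.falsum))
  | negI (A : Fml) : Ax ((A.imp Fml.falsum).imp A.neg)
  | allE (A : Fml) (u v : ℕ) (h : v ∉ A.bound) : Ax ((Fml.all u A).imp (A.rename u v))
  | allK (A B : Fml) (u : ℕ) :
      Ax ((Fml.all u (A.imp B)).imp ((Fml.all u A).imp (Fml.all u B)))
  | allV (A : Fml) (u : ℕ) (h : u ∉ A.free) : Ax (A.imp (Fml.all u A))
  | k (A B : Fml) : Ax (((A.imp B).box).imp (A.box.imp B.box))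

/-- Hilbert-style provability from the base axioms plus extra axioms `Ext`,
closed under modus ponens, necessitation and generalization. -/
inductive Prf (Ext : Fml → Prop) : Fml → Prop
  | ax {A : Fml} : Ax A → Prf Ext A
  | ext {A : Fml} : Ext A → Prf Ext A
  | mp {A B : Fml} : Prf Ext (A.imp B) → Prf Ext A → Prf Ext B
  | nec {A : Fml} : Prf Ext A → Prf Ext A.box
  | gen {A : Fml} (u : ℕ) : Prf Ext A → Prf Ext (Fml.all u A)

/-- The smallest normal predicate modal logic QK. -/
def QK : Fml → Prop := Prf (fun _ => False)

inductive Ax4 : Fml → Prop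
  | four (A : Fml) : Ax4 (A.box.imp A.box.box)

/-- QK4 : QK plus the axiom 4. -/
def QK4 : Fml → Prop := Prf Ax4

inductive AxL : Fml → Prop
  | lob (A : Fml) : AxL (((A.box.imp A).box).imp A.box)

/-- QGL : QK plus Löb's axiom. -/
def QGL : Fml → Prop := Prf AxL

/-- NQGL : QK4 plus the infinitary rule BL. -/
inductive NQGL : Fml → Prop
  | ax {A : Fml} : Ax A → NQGL A
  | four (A : Fml) : NQGL (A.box.imp A.box.box)
  | mp {A B : Fml} : NQGL (A.imp B) → NQGL A → NQGL B
  | nec {A : Fml} : NQGL A → NQGL A.box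
  | gen {A : Fml} (u : ℕ) : NQGL A → NQGL (Fml.all u A)
  | bl {A : Fml} : (∀ n : ℕ, NQGL ((boxIter (n + 1) Fml.falsum).imp A)) → NQGL A

/-- Σ-formulas. -/
inductive IsSigma : Fml → Prop
  | box (A : Fml) : IsSigma A.box
  | lor {A B : Fml} : IsSigma A → IsSigma B → IsSigma (A.lor B)
  | land {A B : Fml} : IsSigma A → IsSigma B → IsSigma (A.land B)
  | ex {A : Fml} (u : ℕ) : IsSigma A → IsSigma (Fml.ex u A)

/- ## Kripke semantics -/

structure KFrame where
  W : Type
  R : W → W → Prop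
  Dom : Type
  D : W → Set Dom
  Dne : ∀ w, (D w).Nonempty
  mono : ∀ {w w'}, R w w' → D w ⊆ D w'

structure KModel extends KFrame where
  I : W → ℕ → List Dom → Prop
  V : W → ℕ → Prop

def Sat (M : KModel) : Fml → M.W → (ℕ → M.Dom) → Prop
  | .verum, _, _ => True
  | .falsum, _, _ => False
  | .pvar q, w, _ => M.V w q
  | .pred P args, w, ρ => M.I w P (args.map ρ)
  | .neg A, w, ρ => ¬ Sat M A w ρ
  | .imp A B, w, ρ => Sat M A w ρ → Sat M B w ρ
  | .all u A, w, ρ => ∀ a ∈ M.D w, Sat M A w (Function.update ρ u a)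
  | .box A, w, ρ => ∀ v, M.R w v → Sat M A v ρ

/-- Validity in a model. -/
def MVal (M : KModel) (A : Fml) : Prop :=
  ∀ (w : M.W) (ρ : ℕ → M.Dom), (∀ x, ρ x ∈ M.D w) → Sat M A w ρ

/-- Validity on a frame. -/
def FVal (F : KFrame) (A : Fml) : Prop :=
  ∀ (I : F.W → ℕ → List F.Dom → Prop) (V : F.W → ℕ → Prop),
    MVal { toKFrame := F, I := I, V := V } A

/-- Smoryński's model. -/
def MS : KModel where
  W := ℕ
  R := fun m n => n < m
  Dom := ℕ
  D := fun n => {m | n ≤ m}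
  Dne := fun n => ⟨n, le_refl n⟩
  mono := by intro w w' h x hx; simp only [Set.mem_setOf_eq] at *; omega
  I := fun w P L => P = 0 ∧ ∀ m ∈ L, m ≠ w + 1
  V := fun _ _ => False

/-- The finite truncations of Smoryński's model. -/
def Mk (k : ℕ) : KModel where
  W := Fin (k + 1)
  R := fun m n => (n : ℕ) < (m : ℕ)
  Dom := ℕ
  D := fun n => {m | (n : ℕ) ≤ m ∧ m ≤ k + 2}
  Dne := fun n => ⟨(n : ℕ), by simp only [Set.mem_setOf_eq]; have := n.isLt; omega⟩
  mono := by intro w w' h x hx; simp only [Set.mem_setOf_eq] at *; omega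
  I := fun w P L => P = 0 ∧ ∀ m ∈ L, m ≠ (w : ℕ) + 1
  V := fun _ _ => False

/-- `A` contains only the unary predicate symbol `P` (coded `0`) and no propositional variables. -/
def OnlyP (A : Fml) : Prop := A.predSig ⊆ {(0, 1)} ∧ A.pvars = ∅

/-- The atomic formula `P(u)`. -/
def Pat (u : ℕ) : Fml := Fml.pred 0 [u]

/-- `h(F) ≤ n`: there is no chain of `n+1` successive `R`-steps. -/
def HeightLe (F : KFrame) (n : ℕ) : Prop :=
  ∀ c : ℕ → F.W, ¬ ∀ i < n + 1, F.R (c i) (c (i + 1))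

end PML

/-!
Induction on the world `n`. The fixed-point equation says that `A` holds at `n` iff no element
`a ≥ n` of the domain fails `P` at a world `v < n` where `A` holds, and in `M_k` the element `a`
fails `P` at `v` exactly when `a = v + 1`. By induction `A` holds at `v` iff `v` is even, so the
only possible witness is `a = n`, `v = n - 1`, which exists iff `n - 1` is even, i.e. iff `n` is odd.
-/

namespace PML

open Fml Function

section Semantics

variable (M : KModel)

theorem sat_iff_iff {A B : Fml} {w : M.W} {ρ : ℕ → M.Dom} :
    Sat M (A.iff B) w ρ ↔ (Sat M A w ρ ↔ Sat M B w ρ) := by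
  simp only [Fml.iff, Fml.land, Sat]
  tauto

theorem update_mem_dom_of_rel {w v : M.W} (hwv : M.R w v) {ρ : ℕ → M.Dom}
    (hρ : ∀ x, ρ x ∈ M.D w) {a : M.Dom} (ha : a ∈ M.D w) (u : ℕ) :
    ∀ x, update ρ u a x ∈ M.D v := by
  intro x
  by_cases hx : x = u
  · subst hx
    exact M.mono hwv (by rwa [update_self])
  · exact M.mono hwv (by rw [update_of_ne hx]; exact hρ x)

end Semantics

theorem Mk.sat_pat {k u : ℕ} {w : Fin (k + 1)} {ρ : ℕ → ℕ} :
    Sat (Mk k) (Pat u) w ρ ↔ ρ u ≠ (w : ℕ) + 1 := by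
  simp [Sat, Pat, Mk]

theorem Mk.mem_dom {k : ℕ} {w : Fin (k + 1)} {a : ℕ} :
    a ∈ (Mk k).D w ↔ (w : ℕ) ≤ a ∧ a ≤ k + 2 :=
  Iff.rfl

theorem Mk.sat_all_box_imp_pat {k u : ℕ} {A : Fml} {w : Fin (k + 1)} {ρ : ℕ → ℕ} :
    Sat (Mk k) (all u (A.imp (Pat u)).box) w ρ ↔
      ∀ a : ℕ, (w : ℕ) ≤ a → a ≤ k + 2 → ∀ v : Fin (k + 1), v < w →
        Sat (Mk k) A v (update ρ u a) → a ≠ (v : ℕ) + 1 := by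
  change (∀ a : ℕ, (w : ℕ) ≤ a ∧ a ≤ k + 2 → ∀ v : Fin (k + 1), v < w →
    Sat (Mk k) A v (update ρ u a) → Sat (Mk k) (Pat u) v (update ρ u a)) ↔ _
  refine forall_congr' fun a => and_imp.trans <| forall₂_congr fun _ _ =>
    forall₂_congr fun v _ => imp_congr_right fun _ => ?_
  exact Mk.sat_pat.trans (by erw [update_self])

theorem Mk.sat_iff_even_of_fixedPoint {k : ℕ} {A : Fml}
    (hfix : MVal (Mk k) (A.iff (all 0 ((A.imp (Pat 0)).box)))) (n : Fin (k + 1)) :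
    ∀ ρ : ℕ → ℕ, (∀ x, ρ x ∈ (Mk k).D n) → (Sat (Mk k) A n ρ ↔ Even (n : ℕ)) := by
  induction n using WellFoundedLT.induction with
  | _ n IH =>
  intro ρ hρ
  have hA_lt : ∀ v : Fin (k + 1), v < n → ∀ a : ℕ, (n : ℕ) ≤ a → a ≤ k + 2 →
      (Sat (Mk k) A v (update ρ 0 a) ↔ Even (v : ℕ)) := fun v hv a ha₁ ha₂ =>
    IH v hv _ (update_mem_dom_of_rel (Mk k) (w := n) hv hρ ⟨ha₁, ha₂⟩ 0)
  rw [(sat_iff_iff _).mp (hfix n ρ hρ), Mk.sat_all_box_imp_pat]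
  constructor
  · intro hB
    by_contra hodd
    have hn_pos : 0 < (n : ℕ) := Nat.pos_of_ne_zero fun h => by simp [h] at hodd
    let v : Fin (k + 1) := ⟨(n : ℕ) - 1, by omega⟩
    have hv : v < n := Fin.lt_def.mpr (Nat.sub_lt hn_pos one_pos)
    have hv_even : Even (v : ℕ) := by
      rw [Nat.even_iff] at hodd ⊢
      change ((n : ℕ) - 1) % 2 = 0
      omega
    exact hB n le_rfl (by omega) v hv ((hA_lt v hv n le_rfl (by omega)).mpr hv_even)
      (by change (n : ℕ) = (n : ℕ) - 1 + 1; omega)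
  · intro heven a ha₁ ha₂ v hv hAv
    have hv_even := (hA_lt v hv a ha₁ ha₂).mp hAv
    rw [Fin.lt_def] at hv
    rw [Nat.even_iff] at heven hv_even
    omega

end PML

open PML PML.Fml in
theorem stmt14_general (k : ℕ) (A : Fml)
    (hfix : MVal (Mk k) (A.iff (Fml.all 0 ((A.imp (Pat 0)).box)))) :
    ∀ n : Fin (k + 1), (Sat (Mk k) A n (fun _ => (n : ℕ)) ↔ Even (n : ℕ)) := fun n =>
  Mk.sat_iff_even_of_fixedPoint hfix n _ fun _ => Mk.mem_dom.mpr ⟨le_rfl, by omega⟩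

open PML PML.Fml in
/-- a fixed point of ∀u □(A → P(u)) in M_k holds exactly at even worlds. -/
theorem stmt14 (k : ℕ) (A : Fml) (hA : OnlyP A) (hsent : A.free = ∅)
    (hfix : MVal (Mk k) (A.iff (Fml.all 0 ((A.imp (Pat 0)).box)))) :
    ∀ n : Fin (k + 1), (Sat (Mk k) A n (fun _ => (n : ℕ)) ↔ Even (n : ℕ)) :=
  stmt14_general k A hfix
end

section
/- Local fixed-point property for FH: for every formula A(p) of predicate modal logic modalized in p, and every transitive Kripke frame F of finite height n, the formula A_n (defined by A_0 := A^{⊤(0)}, A_{k+1} := A^{⊤(k+1)}(p)[⊤, A_k, …, A_0]) satisfies F ⊨ A_n ↔ A(A_n). Consequently, the classes FH, FI, and FIFD have the local fixed-point property. -/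
namespace PML

open Fml

/- ## Auxiliary development for stmt16 -/

section Aux
open Fml

/-- `v` is reachable from `w` in exactly `d` `R`-steps. -/
def ReachN (F : KFrame) : F.W → ℕ → F.W → Prop
  | w, 0, v => v = w
  | w, d + 1, v => ∃ u, F.R w u ∧ ReachN F u d v

/-- No world is reachable from `w` in exactly `m` steps. -/
def Nochain (F : KFrame) (w : F.W) (m : ℕ) : Prop := ¬ ∃ v, ReachN F w m v

lemma reachN_split {F : KFrame} :
    ∀ (a b : ℕ) (w v : F.W), ReachN F w (a + b) v →
      ∃ u, ReachN F w a u ∧ ReachN F u b v := by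
  intro a
  induction a with
  | zero => intro b w v h; exact ⟨w, rfl, by simpa using h⟩
  | succ a ih =>
    intro b w v h
    have h' : ReachN F w ((a + b) + 1) v := by
      have : a + 1 + b = (a + b) + 1 := by omega
      rwa [this] at h
    obtain ⟨x, hR, hx⟩ := h'
    obtain ⟨u, hu1, hu2⟩ := ih b x v hx
    exact ⟨u, ⟨x, hR, hu1⟩, hu2⟩

lemma nochain_mono {F : KFrame} {w : F.W} {a b : ℕ} (h : Nochain F w a) (hab : a ≤ b) :
    Nochain F w b := by
  rintro ⟨v, hv⟩
  have : a + (b - a) = b := by omega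
  rw [← this] at hv
  obtain ⟨u, hu, -⟩ := reachN_split a (b - a) w v hv
  exact h ⟨u, hu⟩

lemma reachN_trans {F : KFrame} :
    ∀ (d : ℕ) (w v : F.W) (e : ℕ) (u : F.W),
      ReachN F w d v → ReachN F v e u → ReachN F w (d + e) u := by
  intro d
  induction d with
  | zero => intro w v e u h1 h2; cases h1; simpa using h2
  | succ d ih =>
    intro w v e u h1 h2
    obtain ⟨x, hR, hx⟩ := h1
    have : d + 1 + e = (d + e) + 1 := by omega
    rw [this]
    exact ⟨x, hR, ih x v e u hx h2⟩

lemma reachN_one {F : KFrame} {w v : F.W} (h : F.R w v) : ReachN F w 1 v :=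
  ⟨v, h, rfl⟩

lemma nochain_of_reach {F : KFrame} {w v : F.W} {m d : ℕ}
    (h : Nochain F w m) (hr : ReachN F w d v) (hd : d ≤ m) : Nochain F v (m - d) := by
  rintro ⟨u, hu⟩
  have he : d + (m - d) = m := by omega
  exact h ⟨u, by rw [← he]; exact reachN_trans d w v (m - d) u hr hu⟩

lemma reachN_chain {F : KFrame} :
    ∀ (m : ℕ) (w v : F.W), ReachN F w m v →
      ∃ c : ℕ → F.W, c 0 = w ∧ ∀ i < m, F.R (c i) (c (i + 1)) := by
  intro m
  induction m with
  | zero => intro w v _; exact ⟨fun _ => w, rfl, by omega⟩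
  | succ m ih =>
    intro w v h
    obtain ⟨u, hR, hu⟩ := h
    obtain ⟨c, hc0, hc⟩ := ih u v hu
    refine ⟨fun i => match i with | 0 => w | j + 1 => c j, rfl, ?_⟩
    intro i hi
    match i with
    | 0 => simpa [hc0] using hR
    | j + 1 => exact hc j (by omega)

lemma nochain_of_heightLe {F : KFrame} {n : ℕ} (h : HeightLe F n) (w : F.W) :
    Nochain F w (n + 1) := by
  rintro ⟨v, hv⟩
  obtain ⟨c, -, hc⟩ := reachN_chain (n + 1) w v hv
  exact h c hc

end Aux

section Sem
open Fml

/-- Under `Nochain w (k+1)`, erasing boxes at depth `k` does not change truth. -/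
lemma sat_eraseT_dsub (M : KModel) (p : ℕ) :
    ∀ (B : Fml) (k : ℕ) (σ : ℕ → Fml) (w : M.W) (ρ : ℕ → M.Dom),
      Nochain M.toKFrame w (k + 1) →
      (Sat M ((eraseT k B).dsub p σ) w ρ ↔ Sat M (B.dsub p σ) w ρ) := by
  intro B
  induction B with
  | verum => intro k σ w ρ _; cases k <;> rfl
  | falsum => intro k σ w ρ _; cases k <;> rfl
  | pvar q => intro k σ w ρ _; cases k <;> rfl
  | pred P args => intro k σ w ρ _; cases k <;> rfl
  | neg A ih =>
    intro k σ w ρ h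
    cases k <;>
      (simp only [eraseT, dsub, Sat]; exact not_congr (ih _ σ w ρ h))
  | imp A B ihA ihB =>
    intro k σ w ρ h
    cases k <;>
      (simp only [eraseT, dsub, Sat]; exact imp_congr (ihA _ σ w ρ h) (ihB _ σ w ρ h))
  | all u A ih =>
    intro k σ w ρ h
    cases k <;>
      (simp only [eraseT, dsub, Sat];
       exact ⟨fun hs a ha => (ih _ σ w _ h).mp (hs a ha),
             fun hs a ha => (ih _ σ w _ h).mpr (hs a ha)⟩)
  | box A ih =>
    intro k σ w ρ h
    match k with
    | 0 =>
      simp only [eraseT, dsub, Sat]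
      constructor
      · intro _ v hv; exact absurd ⟨v, v, hv, rfl⟩ h
      · intro _; trivial
    | k + 1 =>
      simp only [eraseT, dsub, Sat]
      constructor
      · intro hs v hv
        exact (ih k _ v ρ (by simpa using nochain_of_reach h (reachN_one hv) (by omega))).mp
          (hs v hv)
      · intro hs v hv
        exact (ih k _ v ρ (by simpa using nochain_of_reach h (reachN_one hv) (by omega))).mpr
          (hs v hv)

/-- Congruence for depth-indexed substitution: only the values of `σ` at depths where `p`
actually occurs, evaluated at worlds reachable at that depth, matter. -/
lemma sat_dsub_congr (M : KModel) (p : ℕ) :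
    ∀ (B : Fml) (σ σ' : ℕ → Fml) (w : M.W) (ρ : ℕ → M.Dom),
      (∀ d v ρ', occursAt p B d → ReachN M.toKFrame w d v →
        (Sat M (σ d) v ρ' ↔ Sat M (σ' d) v ρ')) →
      (Sat M (B.dsub p σ) w ρ ↔ Sat M (B.dsub p σ') w ρ) := by
  intro B
  induction B with
  | verum => intro σ σ' w ρ _; rfl
  | falsum => intro σ σ' w ρ _; rfl
  | pvar q =>
    intro σ σ' w ρ h
    by_cases hq : q = p
    · simp only [dsub, if_pos hq]
      exact h 0 w ρ ⟨hq, rfl⟩ rfl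
    · simp only [dsub, if_neg hq]
  | pred P args => intro σ σ' w ρ _; rfl
  | neg A ih =>
    intro σ σ' w ρ h
    simp only [dsub, Sat]
    exact not_congr (ih σ σ' w ρ h)
  | imp A B ihA ihB =>
    intro σ σ' w ρ h
    simp only [dsub, Sat]
    exact imp_congr (ihA σ σ' w ρ fun d v ρ' ho hr => h d v ρ' (Or.inl ho) hr)
      (ihB σ σ' w ρ fun d v ρ' ho hr => h d v ρ' (Or.inr ho) hr)
  | all u A ih =>
    intro σ σ' w ρ h
    simp only [dsub, Sat]
    constructor
    · intro hs a ha; exact (ih σ σ' w _ h).mp (hs a ha)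
    · intro hs a ha; exact (ih σ σ' w _ h).mpr (hs a ha)
  | box A ih =>
    intro σ σ' w ρ h
    simp only [dsub, Sat]
    constructor
    · intro hs v hv
      exact (ih _ _ v ρ fun d u ρ' ho hr =>
        h (d + 1) u ρ' ⟨d, rfl, ho⟩ ⟨v, hv, hr⟩).mp (hs v hv)
    · intro hs v hv
      exact (ih _ _ v ρ fun d u ρ' ho hr =>
        h (d + 1) u ρ' ⟨d, rfl, ho⟩ ⟨v, hv, hr⟩).mpr (hs v hv)

lemma dsub_const : ∀ (B : Fml) (p : ℕ) (C : Fml), B.dsub p (fun _ => C) = B.psub p C := by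
  intro B
  induction B with
  | verum => intros; rfl
  | falsum => intros; rfl
  | pvar q => intros; rfl
  | pred P args => intros; rfl
  | neg A ih => intro p C; simp only [dsub, psub, ih]
  | imp A B ihA ihB => intro p C; simp only [dsub, psub, ihA, ihB]
  | all u A ih => intro p C; simp only [dsub, psub, ih]
  | box A ih => intro p C; simp only [dsub, psub]; exact congrArg Fml.box (ih p C)

end Sem

section FP
open Fml

/-- The substitution used at stage `k` of the fixed-point sequence. -/
def fpSig (p : ℕ) (A : Fml) : ℕ → ℕ → Fml
  | 0, _ => verum
  | _ + 1, 0 => verum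
  | j + 1, i + 1 => Fml.fpSeq p A (j - i)

lemma fpSeq_eq (p : ℕ) (A : Fml) (k : ℕ) :
    fpSeq p A k = (eraseT k A).dsub p (fpSig p A k) := by
  match k with
  | 0 =>
    rw [fpSeq]
    congr 1
  | j + 1 =>
    rw [fpSeq]
    congr 1
    funext i
    cases i <;> rfl

lemma fp_stable (M : KModel) (p : ℕ) (A : Fml) :
    ∀ m : ℕ, ∀ w : M.W, Nochain M.toKFrame w (m + 1) → ∀ k, m ≤ k →
      ∀ ρ, (Sat M (fpSeq p A k) w ρ ↔ Sat M (fpSeq p A m) w ρ) := by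
  intro m
  induction m using Nat.strong_induction_on with
  | _ m IH =>
    intro w hw k hk ρ
    rcases eq_or_lt_of_le hk with rfl | hlt
    · exact Iff.rfl
    rw [fpSeq_eq, fpSeq_eq]
    rw [sat_eraseT_dsub M p A k _ w ρ (nochain_mono hw (by omega)),
        sat_eraseT_dsub M p A m _ w ρ hw]
    apply sat_dsub_congr
    intro d v ρ' hocc hreach
    match d with
    | 0 =>
      obtain ⟨k', rfl⟩ : ∃ k', k = k' + 1 := ⟨k - 1, by omega⟩
      match m with
      | 0 => exact Iff.rfl
      | m' + 1 => exact Iff.rfl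
    | d + 1 =>
      have hdm : d + 1 ≤ m := by
        by_contra hcon
        exact nochain_mono hw (by omega) ⟨v, hreach⟩
      obtain ⟨m', rfl⟩ : ∃ m', m = m' + 1 := ⟨m - 1, by omega⟩
      obtain ⟨k', rfl⟩ : ∃ k', k = k' + 1 := ⟨k - 1, by omega⟩
      show Sat M (fpSeq p A (k' - d)) v ρ' ↔ Sat M (fpSeq p A (m' - d)) v ρ'
      have hvn : Nochain M.toKFrame v ((m' - d) + 1) := by
        have := nochain_of_reach hw hreach (by omega)
        have he : m' + 1 + 1 - (d + 1) = (m' - d) + 1 := by omega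
        rwa [he] at this
      exact IH (m' - d) (by omega) v hvn (k' - d) (by omega) ρ'

lemma fp_key (M : KModel) (p : ℕ) (A : Fml) (hmod : Modalized p A) (n : ℕ)
    (w : M.W) (hw : Nochain M.toKFrame w (n + 1)) (ρ : ℕ → M.Dom) :
    Sat M (fpSeq p A n) w ρ ↔ Sat M (A.psub p (fpSeq p A n)) w ρ := by
  rw [← dsub_const, fpSeq_eq, sat_eraseT_dsub M p A n _ w ρ hw]
  apply sat_dsub_congr
  intro d v ρ' hocc hreach
  match d with
  | 0 => exact absurd hocc hmod
  | d + 1 =>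
    have hdn : d + 1 ≤ n := by
      by_contra hcon
      exact nochain_mono hw (by omega) ⟨v, hreach⟩
    obtain ⟨n', rfl⟩ : ∃ n', n = n' + 1 := ⟨n - 1, by omega⟩
    rw [← fpSeq_eq]
    show Sat M (fpSeq p A (n' - d)) v ρ' ↔ Sat M (fpSeq p A (n' + 1)) v ρ'
    have hvn : Nochain M.toKFrame v ((n' - d) + 1) := by
      have := nochain_of_reach hw hreach (by omega)
      have he : n' + 1 + 1 - (d + 1) = (n' - d) + 1 := by omega
      rwa [he] at this
    exact (fp_stable M p A (n' - d) v hvn (n' + 1) (by omega) ρ').symm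

end FP

section Syn
open Fml

lemma pvars_eraseT : ∀ (B : Fml) (k : ℕ), (eraseT k B).pvars ⊆ B.pvars := by
  intro B
  induction B with
  | verum => intro k; cases k <;> exact Finset.Subset.refl _
  | falsum => intro k; cases k <;> exact Finset.Subset.refl _
  | pvar q => intro k; cases k <;> exact Finset.Subset.refl _
  | pred P args => intro k; cases k <;> exact Finset.Subset.refl _
  | neg A ih => intro k; cases k <;> exact ih _
  | imp A B ihA ihB =>
    intro k
    cases k <;> exact Finset.union_subset_union (ihA _) (ihB _)
  | all u A ih => intro k; cases k <;> exact ih _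
  | box A ih =>
    intro k
    match k with
    | 0 => simp [eraseT, pvars]
    | k + 1 => exact ih k

lemma preds_eraseT : ∀ (B : Fml) (k : ℕ), (eraseT k B).preds ⊆ B.preds := by
  intro B
  induction B with
  | verum => intro k; cases k <;> exact Finset.Subset.refl _
  | falsum => intro k; cases k <;> exact Finset.Subset.refl _
  | pvar q => intro k; cases k <;> exact Finset.Subset.refl _
  | pred P args => intro k; cases k <;> exact Finset.Subset.refl _
  | neg A ih => intro k; cases k <;> exact ih _
  | imp A B ihA ihB =>
    intro k
    cases k <;> exact Finset.union_subset_union (ihA _) (ihB _)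
  | all u A ih => intro k; cases k <;> exact ih _
  | box A ih =>
    intro k
    match k with
    | 0 => simp [eraseT, preds]
    | k + 1 => exact ih k

lemma pvars_dsub (p : ℕ) : ∀ (B : Fml) (σ : ℕ → Fml),
    (∀ i, (σ i).pvars = ∅) → (B.dsub p σ).pvars ⊆ B.pvars.erase p := by
  intro B
  induction B with
  | verum => intro σ h; simp [dsub, pvars]
  | falsum => intro σ h; simp [dsub, pvars]
  | pvar q =>
    intro σ h
    by_cases hq : q = p
    · simp [dsub, if_pos hq, h 0]
    · simp [dsub, if_neg hq, pvars, Finset.erase_eq_of_notMem, hq]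
  | pred P args => intro σ h; simp [dsub, pvars]
  | neg A ih => intro σ h; exact ih σ h
  | imp A B ihA ihB =>
    intro σ h
    refine (Finset.union_subset_union (ihA σ h) (ihB σ h)).trans ?_
    show A.pvars.erase p ∪ B.pvars.erase p ⊆ (A.pvars ∪ B.pvars).erase p
    rw [Finset.erase_union_distrib]
  | all u A ih => intro σ h; exact ih σ h
  | box A ih =>
    intro σ h
    exact ih _ (fun i => h (i + 1))

lemma preds_dsub (p : ℕ) (S : Finset ℕ) : ∀ (B : Fml) (σ : ℕ → Fml),
    B.preds ⊆ S → (∀ i, (σ i).preds ⊆ S) → (B.dsub p σ).preds ⊆ S := by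
  intro B
  induction B with
  | verum => intro σ hB h; simpa [dsub] using hB
  | falsum => intro σ hB h; simpa [dsub] using hB
  | pvar q =>
    intro σ hB h
    by_cases hq : q = p
    · simp only [dsub, if_pos hq]; exact h 0
    · simpa [dsub, if_neg hq] using hB
  | pred P args => intro σ hB h; simpa [dsub] using hB
  | neg A ih => intro σ hB h; exact ih σ hB h
  | imp A B ihA ihB =>
    intro σ hB h
    have hA' : A.preds ⊆ S := (Finset.subset_union_left).trans hB
    have hB' : B.preds ⊆ S := (Finset.subset_union_right).trans hB
    exact Finset.union_subset (ihA σ hA' h) (ihB σ hB' h)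
  | all u A ih => intro σ hB h; exact ih σ hB h
  | box A ih => intro σ hB h; exact ih _ hB (fun i => h (i + 1))

lemma fpSeq_pvars (p : ℕ) (A : Fml) (hp : A.pvars ⊆ {p}) :
    ∀ k, (fpSeq p A k).pvars = ∅ := by
  intro k
  induction k using Nat.strong_induction_on with
  | _ k IH =>
    have hσ : ∀ i, (fpSig p A k i).pvars = ∅ := by
      intro i
      match k, i with
      | 0, _ => rfl
      | j + 1, 0 => rfl
      | j + 1, i + 1 => exact IH (j - i) (by omega)
    rw [fpSeq_eq]
    apply Finset.eq_empty_of_forall_notMem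
    intro x hx
    have := pvars_dsub p (eraseT k A) _ hσ hx
    rw [Finset.mem_erase] at this
    exact this.1 (Finset.mem_singleton.mp (hp (pvars_eraseT A k this.2)))

lemma fpSeq_preds (p : ℕ) (A : Fml) : ∀ k, (fpSeq p A k).preds ⊆ A.preds := by
  intro k
  induction k using Nat.strong_induction_on with
  | _ k IH =>
    have hσ : ∀ i, (fpSig p A k i).preds ⊆ A.preds := by
      intro i
      match k, i with
      | 0, _ => simp [fpSig, preds]
      | j + 1, 0 => simp [fpSig, preds]
      | j + 1, i + 1 => exact IH (j - i) (by omega)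
    rw [fpSeq_eq]
    exact preds_dsub p A.preds (eraseT k A) _ (preds_eraseT A k) hσ

end Syn

end PML

open PML PML.Fml in
/-- local fixed-point property for transitive frames of finite height:
A_n is a fixed point of A(p) on every transitive frame of height ≤ n, and hence every
such frame admits a local fixed point for A(p). -/
theorem stmt16 (n : ℕ) (F : KFrame)
    (htrans : ∀ a b c, F.R a b → F.R b c → F.R a c)
    (hht : HeightLe F n)
    (p : ℕ) (A : Fml) (hmod : Modalized p A) (hp : A.pvars ⊆ {p}) :
    FVal F ((fpSeq p A n).iff (A.psub p (fpSeq p A n))) ∧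
    ∃ B : Fml, B.pvars = ∅ ∧ B.preds ⊆ A.preds ∧
      FVal F (B.iff (A.psub p B)) := by
  have hno : ∀ w : F.W, Nochain F w (n + 1) := fun w => nochain_of_heightLe hht w
  have hfv : FVal F ((fpSeq p A n).iff (A.psub p (fpSeq p A n))) := by
    intro I V w ρ _
    have h := fp_key { toKFrame := F, I := I, V := V } p A hmod n w (hno w) ρ
    simp only [Fml.iff, Fml.land, Sat] at h ⊢
    tauto
  exact ⟨hfv, fpSeq p A n, fpSeq_pvars p A hp n, fpSeq_preds p A n, hfv⟩
end
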